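/- Suppose φ, y, ρ, H solve the flat scalar-field system on [t₀, ∞) with the Friedmann constraint 3H² = ρ + (1/2)y² + V(φ), ρ(t₀) > 0, H(t₀) > 0, and the potential satisfies: V(φ) ≥ 0 for all φ; V(φ) → +∞ as φ → -∞; V' is continuous with V'(φ) < 0 for all φ; V' is bounded on every subset A ⊆ ℝ on which V is bounded; and in addition V(φ) → 0 as φ → +∞. Then H(t) → 0 as t → ∞. -/

import Mathlib

/-!
`H` is nonincreasing, and nonnegative by an integrating-factor argument on `ρ`, so `H → L ≥ 0`.
Along the solution `H''` is bounded (the constraint bounds `H`, `y`, `ρ`, `V ∘ φ`, hence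
`V' ∘ φ`), so by Barbalat's lemma `H' = -(y²/2 + γρ/2) → 0`, i.e. `y → 0` and `ρ → 0`.
If `L > 0`, the constraint gives `V(φ) → 3L² > 0`, which traps `φ` eventually in a compact
interval on which `V' ≤ -δ < 0`; then `y' = -3Hy - V'(φ) ≥ δ/2` eventually, contradicting
`y → 0`.
-/

open Filter Set Topology

section CalculusOnIci

variable {f f' : ℝ → ℝ} {a : ℝ}

theorem le_add_mul_sub_of_hasDerivWithinAt_Ici
    (hf : ∀ t ∈ Ici a, HasDerivWithinAt f (f' t) (Ici a) t) {C s u : ℝ} (has : a ≤ s)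
    (hsu : s ≤ u) (hC : ∀ t ∈ Ico s u, f' t ≤ C) : f u ≤ f s + C * (u - s) := by
  have hline : ∀ t, HasDerivWithinAt (fun x => f s + C * (x - s)) C (Ici t) t := fun t =>
    (((hasDerivAt_id t).sub_const s).const_mul C |>.const_add (f s)).hasDerivWithinAt.congr_deriv
      (mul_one C)
  refine image_le_of_deriv_right_le_deriv_boundary
    (fun t ht => (hf t (has.trans ht.1)).continuousWithinAt.mono fun x hx => has.trans hx.1)
    (fun t ht => (hf t (has.trans ht.1)).mono (Ici_subset_Ici.mpr (has.trans ht.1)))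
    (by simp) (by fun_prop) (fun t _ => hline t) hC ⟨hsu, le_rfl⟩

theorem abs_sub_le_mul_sub_of_hasDerivWithinAt_Ici
    (hf : ∀ t ∈ Ici a, HasDerivWithinAt f (f' t) (Ici a) t) {C s u : ℝ} (has : a ≤ s)
    (hsu : s ≤ u) (hC : ∀ t ∈ Ico s u, |f' t| ≤ C) : |f u - f s| ≤ C * (u - s) :=
  norm_image_sub_le_of_norm_deriv_le_segment'
    (fun t ht => (hf t (has.trans ht.1)).mono fun _ hx => has.trans hx.1) hC u ⟨hsu, le_rfl⟩

theorem antitoneOn_Ici_of_hasDerivWithinAt_nonpos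
    (hf : ∀ t ∈ Ici a, HasDerivWithinAt f (f' t) (Ici a) t) (hf' : ∀ t ∈ Ici a, f' t ≤ 0) :
    AntitoneOn f (Ici a) := fun s hs u _ hsu => by
  simpa using le_add_mul_sub_of_hasDerivWithinAt_Ici hf hs hsu fun t ht => hf' t (hs.trans ht.1)

theorem tendsto_atBot_of_eventually_deriv_le
    (hf : ∀ t ∈ Ici a, HasDerivWithinAt f (f' t) (Ici a) t) {c : ℝ} (hc : 0 < c)
    (hf' : ∀ᶠ t in atTop, f' t ≤ -c) : Tendsto f atTop atBot := by
  obtain ⟨T, hT⟩ := eventually_atTop.mp (hf'.and (eventually_ge_atTop a))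
  have hline : Tendsto (fun t => f T + -c * (t - T)) atTop atBot :=
    tendsto_atBot_add_const_left _ _ <|
      (tendsto_atTop_add_const_right _ _ tendsto_id).const_mul_atTop_of_neg (neg_lt_zero.mpr hc)
  refine tendsto_atBot_mono' _ ?_ hline
  filter_upwards [eventually_ge_atTop T] with t ht
  exact le_add_mul_sub_of_hasDerivWithinAt_Ici hf (hT T le_rfl).2 ht fun s hs => (hT s hs.1).1

theorem tendsto_atTop_of_eventually_deriv_ge
    (hf : ∀ t ∈ Ici a, HasDerivWithinAt f (f' t) (Ici a) t) {c : ℝ} (hc : 0 < c)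
    (hf' : ∀ᶠ t in atTop, c ≤ f' t) : Tendsto f atTop atTop := by
  have := tendsto_atBot_of_eventually_deriv_le (f := -f) (f' := -f')
    (fun t ht => (hf t ht).neg) hc (hf'.mono fun t ht => neg_le_neg ht)
  simpa [Function.comp_def] using tendsto_neg_atBot_atTop.comp this

theorem exists_tendsto_of_antitoneOn_Ici {b : ℝ} (hf : AntitoneOn f (Ici a))
    (hb : ∀ t ∈ Ici a, b ≤ f t) : ∃ L, Tendsto f atTop (𝓝 L) := by
  have hanti : Antitone fun t => f (max t a) := fun s u hsu =>
    hf (le_max_right s a) (le_max_right u a) (max_le_max hsu le_rfl)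
  refine ⟨_, (tendsto_atTop_ciInf hanti ⟨b, ?_⟩).congr' ?_⟩
  · rintro _ ⟨t, rfl⟩
    exact hb _ (le_max_right t a)
  · filter_upwards [eventually_ge_atTop a] with t ht
    rw [max_eq_left ht]

theorem exists_hasDerivWithinAt_Ici_of_continuousOn (hf : ContinuousOn f (Ici a)) :
    ∃ F : ℝ → ℝ, ∀ t ∈ Ici a, HasDerivWithinAt F (f t) (Ici a) t := by
  have hext : Continuous fun t => f (max t a) :=
    hf.comp_continuous (by fun_prop) fun t => le_max_right t a
  refine ⟨fun t => ∫ s in a..t, f (max s a), fun t ht => ?_⟩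
  simpa [max_eq_left (mem_Ici.mp ht)] using
    (hext.integral_hasStrictDerivAt a t).hasDerivAt.hasDerivWithinAt (s := Ici a)

theorem eq_mul_exp_of_hasDerivWithinAt_Ici {F h : ℝ → ℝ}
    (hf : ∀ t ∈ Ici a, HasDerivWithinAt f (h t * f t) (Ici a) t)
    (hF : ∀ t ∈ Ici a, HasDerivWithinAt F (h t) (Ici a) t) {t : ℝ} (ht : a ≤ t) :
    f t = f a * Real.exp (F t - F a) := by
  have hconst := abs_sub_le_mul_sub_of_hasDerivWithinAt_Ici
    (f := fun t => f t * Real.exp (-F t)) (f' := fun _ => 0) (C := 0)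
    (fun s hs => ((hf s hs).mul ((hF s hs).neg.exp)).congr_deriv (by ring)) le_rfl ht
    (by simp)
  rw [zero_mul, abs_nonpos_iff, sub_eq_zero] at hconst
  rw [sub_eq_neg_add, Real.exp_add, ← mul_assoc, ← hconst, mul_assoc, ← Real.exp_add]
  simp

/-- Barbalat's lemma. -/
theorem tendsto_deriv_zero_of_tendsto_of_abs_deriv_deriv_le {f'' : ℝ → ℝ} {K L : ℝ}
    (hf : ∀ t ∈ Ici a, HasDerivWithinAt f (f' t) (Ici a) t)
    (hf' : ∀ t ∈ Ici a, HasDerivWithinAt f' (f'' t) (Ici a) t) (hK : ∀ t ∈ Ici a, |f'' t| ≤ K)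
    (hL : Tendsto f atTop (𝓝 L)) : Tendsto f' atTop (𝓝 0) := by
  rw [Metric.tendsto_atTop]
  intro ε hε
  obtain ⟨d, hd, hKd⟩ := exists_pos_mul_lt (half_pos hε) K
  have hincr : Tendsto (fun t => f (t + d) - f t) atTop (𝓝 0) := by
    simpa using (hL.comp (tendsto_atTop_add_const_right _ d tendsto_id)).sub hL
  obtain ⟨T, hT⟩ := Metric.tendsto_atTop.mp hincr (ε * d / 2) (by positivity)
  refine ⟨max T a, fun t ht => ?_⟩
  have hta : a ≤ t := le_of_max_le_right ht
  have hK0 : 0 ≤ K := (abs_nonneg _).trans (hK t hta)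
  have hf'_near : ∀ s ∈ Ico t (t + d), |f' s - f' t| ≤ K * d := fun s hs =>
    (abs_sub_le_mul_sub_of_hasDerivWithinAt_Ici hf' hta hs.1 fun r hr =>
      hK r (hta.trans hr.1)).trans (by gcongr; linarith [hs.2])
  have htaylor : |f (t + d) - f t - f' t * d| ≤ K * d * d := by
    have := abs_sub_le_mul_sub_of_hasDerivWithinAt_Ici (f := fun s => f s - f' t * s)
      (fun s hs => ((hf s hs).sub ((hasDerivWithinAt_id s _).const_mul (f' t))).congr_deriv
        (by ring)) hta (by linarith) hf'_near
    convert this using 2 <;> ring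
  have hgap := hT t (le_of_max_le_left ht)
  rw [Real.dist_eq, sub_zero] at hgap ⊢
  have hprod : |f' t| * d < ε * d := by
    calc |f' t| * d = |f' t * d| := by rw [abs_mul, abs_of_pos hd]
      _ ≤ |f (t + d) - f t| + |f (t + d) - f t - f' t * d| := by
          linarith [abs_sub_abs_le_abs_sub (f' t * d) (f (t + d) - f t),
            abs_sub_comm (f' t * d) (f (t + d) - f t)]
      _ < ε * d / 2 + K * d * d := by linarith
      _ ≤ ε * d := by nlinarith
  exact lt_of_mul_lt_mul_right hprod hd.le

end CalculusOnIci

section FlatScalarField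

variable {t₀ γ L : ℝ} {V φ y ρ H : ℝ → ℝ}

theorem hubble_antitoneOn (hγ : 0 ≤ γ)
    (hH : ∀ t ∈ Ici t₀, HasDerivWithinAt H (-(1 / 2) * y t ^ 2 - γ / 2 * ρ t) (Ici t₀) t)
    (hρ0 : ∀ t ∈ Ici t₀, 0 ≤ ρ t) : AntitoneOn H (Ici t₀) :=
  antitoneOn_Ici_of_hasDerivWithinAt_nonpos hH fun t ht => by
    nlinarith [sq_nonneg (y t), mul_nonneg hγ (hρ0 t ht)]

/-- `ρ g² = ρ(t₀)` for the integrating factor `g = exp (3γ/2 ∫ H)`; once `H` is negative, `H g`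
stays below `-√(ρ(t₀)/3)`, so `g' = (3γ/2) H g` drives the positive function `g` to `-∞`. -/
theorem hubble_nonneg (hγ : 0 < γ)
    (hρ : ∀ t ∈ Ici t₀, HasDerivWithinAt ρ (-3 * γ * ρ t * H t) (Ici t₀) t)
    (hH : ∀ t ∈ Ici t₀, HasDerivWithinAt H (-(1 / 2) * y t ^ 2 - γ / 2 * ρ t) (Ici t₀) t)
    (hρ0 : ∀ t ∈ Ici t₀, 0 ≤ ρ t)
    (hcon : ∀ t ∈ Ici t₀, 3 * H t ^ 2 = ρ t + 1 / 2 * y t ^ 2 + V (φ t))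
    (hVnn : ∀ s : ℝ, 0 ≤ V s) (hρt₀ : 0 < ρ t₀) : ∀ t ∈ Ici t₀, 0 ≤ H t := by
  obtain ⟨G, hG⟩ := exists_hasDerivWithinAt_Ici_of_continuousOn fun t ht =>
    (hH t ht).continuousWithinAt
  set g : ℝ → ℝ := fun t => Real.exp (3 * γ / 2 * (G t - G t₀)) with hg
  have hg' : ∀ t ∈ Ici t₀, HasDerivWithinAt g (3 * γ / 2 * H t * g t) (Ici t₀) t := fun t ht =>
    ((((hG t ht).sub_const (G t₀)).const_mul (3 * γ / 2)).exp).congr_deriv (by ring)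
  have hρg : ∀ t ∈ Ici t₀, ρ t * g t ^ 2 = ρ t₀ := by
    intro t ht
    rw [eq_mul_exp_of_hasDerivWithinAt_Ici (F := fun t => -3 * γ * G t)
      (fun s hs => (hρ s hs).congr_deriv (by ring)) (fun s hs => (hG s hs).const_mul _) ht,
      hg, ← Real.exp_nat_mul, mul_assoc, ← Real.exp_add]
    convert mul_one (ρ t₀) using 2
    rw [Real.exp_eq_one_iff]
    push_cast
    ring
  by_contra! hneg
  obtain ⟨t₁, ht₁, hHt₁⟩ := hneg
  have hdecay : ∀ᶠ t in atTop, 3 * γ / 2 * H t * g t ≤ -(3 * γ / 2 * √(ρ t₀ / 3)) := by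
    filter_upwards [eventually_ge_atTop t₁] with t ht
    have ht₀ : t ∈ Ici t₀ := le_trans ht₁ ht
    have hHt : H t < 0 := (hubble_antitoneOn hγ.le hH hρ0 ht₁ ht₀ ht).trans_lt hHt₁
    have hρH : ρ t ≤ 3 * H t ^ 2 := by nlinarith [hcon t ht₀, sq_nonneg (y t), hVnn (φ t)]
    have hHg : √(ρ t₀ / 3) ≤ -(H t * g t) := by
      refine Real.sqrt_le_iff.mpr ⟨by nlinarith [Real.exp_pos (3 * γ / 2 * (G t - G t₀))], ?_⟩
      nlinarith [hρg t ht₀, mul_le_mul_of_nonneg_right hρH (sq_nonneg (g t))]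
    nlinarith
  obtain ⟨t, ht⟩ := ((tendsto_atBot_of_eventually_deriv_le hg' (by positivity)
    hdecay).eventually_lt_atBot 0).exists
  exact lt_asymm (Real.exp_pos _) ht

theorem exists_abs_hubble_deriv_deriv_le (hγ : 0 < γ)
    (hH : ∀ t ∈ Ici t₀, HasDerivWithinAt H (-(1 / 2) * y t ^ 2 - γ / 2 * ρ t) (Ici t₀) t)
    (hρ0 : ∀ t ∈ Ici t₀, 0 ≤ ρ t)
    (hcon : ∀ t ∈ Ici t₀, 3 * H t ^ 2 = ρ t + 1 / 2 * y t ^ 2 + V (φ t))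
    (hVnn : ∀ s : ℝ, 0 ≤ V s)
    (hV'bdd : ∀ A : Set ℝ, Bornology.IsBounded (V '' A) → Bornology.IsBounded (deriv V '' A))
    (hHnn : ∀ t ∈ Ici t₀, 0 ≤ H t) : ∃ K, ∀ t ∈ Ici t₀,
      |y t * (3 * H t * y t + deriv V (φ t)) + 3 * γ ^ 2 / 2 * ρ t * H t| ≤ K := by
  set B := H t₀
  have hHB : ∀ t ∈ Ici t₀, H t ≤ B := fun t ht =>
    hubble_antitoneOn hγ.le hH hρ0 self_mem_Ici ht ht
  have hHabs : ∀ t ∈ Ici t₀, |H t| ≤ B := fun t ht => by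
    rw [abs_of_nonneg (hHnn t ht)]; exact hHB t ht
  have hyabs : ∀ t ∈ Ici t₀, |y t| ≤ 3 * B := fun t ht =>
    abs_le_of_sq_le_sq (by nlinarith [hcon t ht, hρ0 t ht, hVnn (φ t), hHnn t ht, hHB t ht])
      (by linarith [hHnn t ht, hHB t ht])
  have hρabs : ∀ t ∈ Ici t₀, |ρ t| ≤ 3 * B ^ 2 := fun t ht => by
    rw [abs_of_nonneg (hρ0 t ht)]
    nlinarith [hcon t ht, sq_nonneg (y t), hVnn (φ t), hHnn t ht, hHB t ht]
  obtain ⟨M, hM⟩ : ∃ M, ∀ t ∈ Ici t₀, |deriv V (φ t)| ≤ M := by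
    have hVφ : Bornology.IsBounded (V '' (φ '' Ici t₀)) := by
      refine (Metric.isBounded_Icc 0 (3 * B ^ 2)).subset ?_
      rintro _ ⟨_, ⟨t, ht, rfl⟩, rfl⟩
      exact ⟨hVnn _, by nlinarith [hcon t ht, sq_nonneg (y t), hρ0 t ht, hHnn t ht, hHB t ht]⟩
    obtain ⟨M, hM⟩ := isBounded_iff_forall_norm_le.mp (hV'bdd _ hVφ)
    exact ⟨M, fun t ht => hM _ ⟨φ t, ⟨t, ht, rfl⟩, rfl⟩⟩
  refine ⟨3 * B * (3 * B * (3 * B) + M) + 3 * γ ^ 2 / 2 * (3 * B ^ 2) * B, fun t ht => ?_⟩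
  calc _ ≤ |y t| * (3 * |H t| * |y t| + |deriv V (φ t)|) + 3 * γ ^ 2 / 2 * |ρ t| * |H t| := by
        refine (abs_add_le _ _).trans (add_le_add ?_ (le_of_eq ?_))
        · rw [abs_mul]
          gcongr
          exact (abs_add_le _ _).trans (by simp [abs_mul])
        · rw [abs_mul, abs_mul, abs_of_nonneg (by positivity : (0 : ℝ) ≤ 3 * γ ^ 2 / 2)]
    _ ≤ _ := by
        have := hyabs t ht; have := hHabs t ht; have := hρabs t ht; have := hM t ht
        have : 0 ≤ 3 * B := by linarith [hHnn t₀ self_mem_Ici]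
        gcongr

theorem tendsto_velocity_zero_and_tendsto_density_zero (hγ : 0 < γ)
    (hy : ∀ t ∈ Ici t₀,
      HasDerivWithinAt y (-3 * H t * y t - deriv V (φ t)) (Ici t₀) t)
    (hρ : ∀ t ∈ Ici t₀, HasDerivWithinAt ρ (-3 * γ * ρ t * H t) (Ici t₀) t)
    (hH : ∀ t ∈ Ici t₀, HasDerivWithinAt H (-(1 / 2) * y t ^ 2 - γ / 2 * ρ t) (Ici t₀) t)
    (hρ0 : ∀ t ∈ Ici t₀, 0 ≤ ρ t)
    (hcon : ∀ t ∈ Ici t₀, 3 * H t ^ 2 = ρ t + 1 / 2 * y t ^ 2 + V (φ t))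
    (hVnn : ∀ s : ℝ, 0 ≤ V s)
    (hV'bdd : ∀ A : Set ℝ, Bornology.IsBounded (V '' A) → Bornology.IsBounded (deriv V '' A))
    (hHnn : ∀ t ∈ Ici t₀, 0 ≤ H t) (hL : Tendsto H atTop (𝓝 L)) :
    Tendsto y atTop (𝓝 0) ∧ Tendsto ρ atTop (𝓝 0) := by
  have hH'' : ∀ t ∈ Ici t₀, HasDerivWithinAt (fun t => -(1 / 2) * y t ^ 2 - γ / 2 * ρ t)
      (y t * (3 * H t * y t + deriv V (φ t)) + 3 * γ ^ 2 / 2 * ρ t * H t) (Ici t₀) t :=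
    fun t ht => (((hy t ht).pow 2).const_mul _).sub ((hρ t ht).const_mul _) |>.congr_deriv
      (by ring)
  obtain ⟨K, hK⟩ := exists_abs_hubble_deriv_deriv_le hγ hH hρ0 hcon hVnn hV'bdd hHnn
  have hH'lim : Tendsto (fun t => 1 / 2 * y t ^ 2 + γ / 2 * ρ t) atTop (𝓝 0) := by
    convert (tendsto_deriv_zero_of_tendsto_of_abs_deriv_deriv_le hH hH'' hK hL).neg using 1
    · ext t; ring
    · simp
  have hy2 : Tendsto (fun t => 1 / 2 * y t ^ 2) atTop (𝓝 0) :=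
    squeeze_zero' (.of_forall fun t => by positivity)
      ((eventually_ge_atTop t₀).mono fun t ht => by nlinarith [hρ0 t ht]) hH'lim
  have hγρ : Tendsto (fun t => γ / 2 * ρ t) atTop (𝓝 0) :=
    squeeze_zero' ((eventually_ge_atTop t₀).mono fun t ht => by nlinarith [hρ0 t ht])
      (.of_forall fun t => by nlinarith [sq_nonneg (y t)]) hH'lim
  constructor
  · rw [tendsto_zero_iff_abs_tendsto_zero]
    simpa [Function.comp_def, Real.sqrt_sq_eq_abs] using (hy2.const_mul 2).sqrt
  · convert hγρ.const_mul (2 / γ) using 1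
    · ext t; field_simp
    · simp

end FlatScalarField

theorem exists_eventually_mem_Icc_of_tendsto_comp {V φ : ℝ → ℝ} {c : ℝ}
    (hVbot : Tendsto V atBot atTop) (hVtop : Tendsto V atTop (𝓝 0)) (hc : 0 < c)
    (h : Tendsto (fun t => V (φ t)) atTop (𝓝 c)) : ∃ a b, ∀ᶠ t in atTop, φ t ∈ Icc a b := by
  obtain ⟨a, ha⟩ := eventually_atBot.mp (hVbot.eventually_gt_atTop (c + 1))
  obtain ⟨b, hb⟩ := eventually_atTop.mp (hVtop.eventually (gt_mem_nhds (half_pos hc)))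
  refine ⟨a, b, ?_⟩
  filter_upwards [h.eventually (lt_mem_nhds (half_lt_self hc)),
    h.eventually (gt_mem_nhds (lt_add_one c))] with t hlow hup
  exact ⟨not_lt.mp fun hφ => lt_asymm hup (ha _ hφ.le),
    not_lt.mp fun hφ => lt_asymm hlow (hb _ hφ.le)⟩

theorem stmt_5_general (t₀ γ : ℝ) (hγ0 : 0 < γ)
    (V : ℝ → ℝ)
    (φ y ρ H : ℝ → ℝ)
    (hy : ∀ t ∈ Set.Ici t₀,
      HasDerivWithinAt y (-3 * H t * y t - deriv V (φ t)) (Set.Ici t₀) t)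
    (hρ : ∀ t ∈ Set.Ici t₀, HasDerivWithinAt ρ (-3 * γ * ρ t * H t) (Set.Ici t₀) t)
    (hH : ∀ t ∈ Set.Ici t₀,
      HasDerivWithinAt H (-(1 / 2) * y t ^ 2 - γ / 2 * ρ t) (Set.Ici t₀) t)
    (hρ0 : ∀ t ∈ Set.Ici t₀, 0 ≤ ρ t)
    (hcon : ∀ t ∈ Set.Ici t₀, 3 * H t ^ 2 = ρ t + 1 / 2 * y t ^ 2 + V (φ t))
    (hVnn : ∀ s : ℝ, 0 ≤ V s)
    (hVbot : Tendsto V atBot atTop)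
    (hV'cont : Continuous (deriv V))
    (hV'neg : ∀ s : ℝ, deriv V s < 0)
    (hV'bdd : ∀ A : Set ℝ, Bornology.IsBounded (V '' A) →
      Bornology.IsBounded (deriv V '' A))
    (hVtop : Tendsto V atTop (nhds 0))
    (hρt₀ : 0 < ρ t₀) :
    Tendsto H atTop (nhds 0) := by
  have hHnn := hubble_nonneg hγ0 hρ hH hρ0 hcon hVnn hρt₀
  obtain ⟨L, hL⟩ := exists_tendsto_of_antitoneOn_Ici (hubble_antitoneOn hγ0.le hH hρ0) hHnn
  obtain ⟨hy0, hρlim⟩ := tendsto_velocity_zero_and_tendsto_density_zero hγ0 hy hρ hH hρ0 hcon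
    hVnn hV'bdd hHnn hL
  obtain rfl | hLpos := (ge_of_tendsto hL ((eventually_ge_atTop t₀).mono hHnn)).eq_or_lt
  · exact hL
  exfalso
  have hVφ : Tendsto (fun t => V (φ t)) atTop (𝓝 (3 * L ^ 2)) := by
    rw [show 3 * L ^ 2 = 3 * L ^ 2 - 0 - 1 / 2 * 0 ^ 2 by ring]
    refine ((((hL.pow 2).const_mul 3).sub hρlim).sub ((hy0.pow 2).const_mul (1 / 2))).congr' ?_
    filter_upwards [eventually_ge_atTop t₀] with t ht
    linarith [hcon t ht]
  obtain ⟨a, b, hφab⟩ := exists_eventually_mem_Icc_of_tendsto_comp hVbot hVtop (by positivity) hVφ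
  obtain ⟨δ, hδ, hV'δ⟩ := isCompact_Icc.exists_forall_le' (f := fun s => -deriv V s) (a := 0)
    hV'cont.neg.continuousOn fun s _ => neg_pos.mpr (hV'neg s)
  have hHy : Tendsto (fun t => 3 * H t * y t) atTop (𝓝 0) := by
    simpa using (hL.const_mul 3).mul hy0
  have hpush : ∀ᶠ t in atTop, δ / 2 ≤ -3 * H t * y t - deriv V (φ t) := by
    filter_upwards [hφab, hHy.eventually (gt_mem_nhds (half_pos hδ))] with t hφt hsmall
    linarith [hV'δ _ hφt]
  exact not_tendsto_nhds_of_tendsto_atTop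
    (tendsto_atTop_of_eventually_deriv_ge hy (half_pos hδ) hpush) 0 hy0

/-- If, in addition to the hypotheses of Proposition 4, the potential satisfies
`V(φ) → 0` as `φ → +∞` (as for an exponential potential), then `H(t) → 0` as
`t → ∞`. -/
theorem stmt_5 (t₀ γ : ℝ) (hγ0 : 0 < γ) (hγ2 : γ ≤ 2)
    (V : ℝ → ℝ) (hV : ContDiff ℝ 2 V)
    (φ y ρ H : ℝ → ℝ)
    (hφ : ∀ t ∈ Set.Ici t₀, HasDerivWithinAt φ (y t) (Set.Ici t₀) t)
    (hy : ∀ t ∈ Set.Ici t₀,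
      HasDerivWithinAt y (-3 * H t * y t - deriv V (φ t)) (Set.Ici t₀) t)
    (hρ : ∀ t ∈ Set.Ici t₀, HasDerivWithinAt ρ (-3 * γ * ρ t * H t) (Set.Ici t₀) t)
    (hH : ∀ t ∈ Set.Ici t₀,
      HasDerivWithinAt H (-(1 / 2) * y t ^ 2 - γ / 2 * ρ t) (Set.Ici t₀) t)
    (hρ0 : ∀ t ∈ Set.Ici t₀, 0 ≤ ρ t)
    (hcon : ∀ t ∈ Set.Ici t₀, 3 * H t ^ 2 = ρ t + 1 / 2 * y t ^ 2 + V (φ t))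
    (hVnn : ∀ s : ℝ, 0 ≤ V s)
    (hVbot : Tendsto V atBot atTop)
    (hV'cont : Continuous (deriv V))
    (hV'neg : ∀ s : ℝ, deriv V s < 0)
    (hV'bdd : ∀ A : Set ℝ, Bornology.IsBounded (V '' A) →
      Bornology.IsBounded (deriv V '' A))
    (hVtop : Tendsto V atTop (nhds 0))
    (hρt₀ : 0 < ρ t₀) (hH0 : 0 < H t₀) :
    Tendsto H atTop (nhds 0) :=
  stmt_5_general t₀ γ hγ0 V φ y ρ H hy hρ hH hρ0 hcon hVnn hVbot hV'cont hV'neg hV'bdd hVtop hρt₀
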